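/- Set β = (α − Σ)/(α + Σ), so 0 < β < 1. For every w > 0 the integrals below converge and ∫₀^∞ e^{−wT} · (log C)'''(T) dT = α² − Σ² − 2wΣ · β^{−w/(2Σ)} · ∫₀^β x^{w/(2Σ)} / (1 − x)² dx. (The last integral is the incomplete beta function B_β(1 + w/(2Σ), −1).) -/

import Mathlib

open Real MeasureTheory Filter

/-- `Σ = √(3α²/2 − 1/8)`. -/
noncomputable def Sg (α : ℝ) : ℝ := Real.sqrt (3 * α ^ 2 / 2 - 1 / 8)

/-- `C(T) = Σ·cosh(ΣT) + α·sinh(ΣT)`. -/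
noncomputable def Cg (α : ℝ) (T : ℝ) : ℝ :=
  Sg α * Real.cosh (Sg α * T) + α * Real.sinh (Sg α * T)

/-! Write `β = (α − Σ)/(α + Σ)` and `u(T) = β e^{−2ΣT}`. Then `C(T) = (α + Σ)/2 · e^{ΣT} (1 − u(T))`,
so `(log C)' = Σ (1 + u)/(1 − u)` and `(log C)''' = 8Σ³ u (1 + u)/(1 − u)³`. The substitution
`x = u(T)`, under which `e^{−wT} = (x/β)^s` with `s = w/(2Σ)` and `|dx| = 2Σx dT`, maps `(0, ∞)`
onto `(0, β)` and turns the Laplace transform into `4Σ²β^{−s} ∫₀^β x^s (1 + x)/(1 − x)³ dx`.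
Since `x^s (1 + x)/(1 − x)³ + s x^s/(1 − x)²` is the derivative of `x^{s+1}/(1 − x)²`, this equals
`4Σ²β/(1 − β)² − 4Σ²s β^{−s} ∫₀^β x^s/(1 − x)² dx`, and `4Σ²β/(1 − β)² = α² − Σ²`. -/

open Set

lemma iteratedDeriv_succ_eqOn_of_hasDerivAt {𝕜 F : Type*} [NontriviallyNormedField 𝕜]
    [NormedAddCommGroup F] [NormedSpace 𝕜 F] {f g : 𝕜 → F} {U : Set 𝕜} (hU : IsOpen U)
    (hf : ∀ x ∈ U, HasDerivAt f (g x) x) (n : ℕ) :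
    EqOn (iteratedDeriv (n + 1) f) (iteratedDeriv n g) U := by
  rw [iteratedDeriv_succ']
  exact EqOn.iteratedDeriv_of_isOpen (fun x hx => (hf x hx).deriv) hU n

noncomputable def expDecay (S b T : ℝ) : ℝ := b * exp (-(2 * S * T))

section expDecay

variable {S b : ℝ}

lemma hasDerivAt_expDecay (S b x : ℝ) :
    HasDerivAt (expDecay S b) (-(2 * S) * expDecay S b x) x := by
  have h : HasDerivAt (fun T => -(2 * S * T)) (-(2 * S)) x := by
    simpa using ((hasDerivAt_id x).const_mul (2 * S)).fun_neg
  exact (h.exp.const_mul b).congr_deriv (by rw [expDecay]; ring)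

lemma continuous_expDecay (S b : ℝ) : Continuous (expDecay S b) := by
  unfold expDecay; fun_prop

lemma expDecay_pos (hb : 0 < b) (T : ℝ) : 0 < expDecay S b T := mul_pos hb (exp_pos _)

lemma expDecay_lt (hS : 0 < S) (hb : 0 < b) {T : ℝ} (hT : 0 < T) : expDecay S b T < b :=
  mul_lt_of_lt_one_right hb (exp_lt_one_iff.mpr (by nlinarith))

lemma expDecay_injective (hS : S ≠ 0) (hb : b ≠ 0) : Function.Injective (expDecay S b) := by
  intro x y hxy
  have := exp_injective (mul_left_cancel₀ hb hxy)
  simpa [hS] using this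

lemma image_expDecay_Ioi (hS : 0 < S) (hb : 0 < b) : expDecay S b '' Ioi 0 = Ioo 0 b := by
  refine Subset.antisymm ?_ fun y ⟨hy0, hyb⟩ => ⟨log (b / y) / (2 * S), ?_, ?_⟩
  · rintro _ ⟨T, hT, rfl⟩
    exact ⟨expDecay_pos hb T, expDecay_lt hS hb hT⟩
  · exact div_pos (log_pos ((one_lt_div hy0).mpr hyb)) (by positivity)
  · rw [expDecay, mul_div_cancel₀ _ (by positivity), exp_neg, exp_log (by positivity)]
    field_simp

lemma expDecay_rpow (hb : 0 < b) (s T : ℝ) :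
    expDecay S b T ^ s = b ^ s * exp (-(2 * S * s * T)) := by
  rw [expDecay, mul_rpow hb.le (exp_pos _).le, ← exp_mul]
  ring_nf

lemma exp_sub_mul_exp_neg (S b x : ℝ) :
    exp (S * x) - b * exp (-(S * x)) = exp (S * x) * (1 - expDecay S b x) := by
  rw [expDecay, mul_sub, mul_one, mul_left_comm, ← exp_add]
  ring_nf

end expDecay

section logDeriv

variable {S b : ℝ}

local notation "u" => expDecay S b

lemma hasDerivAt_log_exp_sub_mul_exp_neg {c x : ℝ} (hc : 0 < c) (hx : u x < 1) :
    HasDerivAt (fun y => log (c * (exp (S * y) - b * exp (-(S * y)))))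
      (S * (1 + u x) / (1 - u x)) x := by
  simp_rw [exp_sub_mul_exp_neg S b]
  have hpos : 0 < c * (exp (S * x) * (1 - u x)) := by
    have : 0 < 1 - u x := by linarith
    positivity
  have h := (((hasDerivAt_id' x |>.const_mul S).exp.fun_mul
    ((hasDerivAt_expDecay S b x).const_sub 1)).const_mul c).log hpos.ne'
  refine h.congr_deriv ?_
  have : 1 - u x ≠ 0 := by linarith
  field_simp
  ring

lemma hasDerivAt_one_add_expDecay_div {x : ℝ} (hx : u x ≠ 1) :
    HasDerivAt (fun y => S * (1 + u y) / (1 - u y)) (-(4 * S ^ 2) * u x / (1 - u x) ^ 2) x := by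
  have h1 : 1 - u x ≠ 0 := sub_ne_zero.mpr hx.symm
  refine ((((hasDerivAt_expDecay S b x).const_add 1).const_mul S).div
    ((hasDerivAt_expDecay S b x).const_sub 1) h1).congr_deriv ?_
  field_simp
  ring

lemma hasDerivAt_expDecay_div_sq {x : ℝ} (hx : u x ≠ 1) :
    HasDerivAt (fun y => -(4 * S ^ 2) * u y / (1 - u y) ^ 2)
      (8 * S ^ 3 * u x * (1 + u x) / (1 - u x) ^ 3) x := by
  have h1 : 1 - u x ≠ 0 := sub_ne_zero.mpr hx.symm
  refine (((hasDerivAt_expDecay S b x).const_mul _).div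
    (((hasDerivAt_expDecay S b x).const_sub 1).fun_pow 2) (pow_ne_zero 2 h1)).congr_deriv ?_
  field_simp
  ring

lemma iteratedDeriv_three_log_exp_sub_mul_exp_neg {c : ℝ} (hc : 0 < c) :
    EqOn (iteratedDeriv 3 fun y => log (c * (exp (S * y) - b * exp (-(S * y)))))
      (fun x => 8 * S ^ 3 * u x * (1 + u x) / (1 - u x) ^ 3) {x | u x < 1} := by
  have hU : IsOpen {x | u x < 1} := isOpen_lt (continuous_expDecay S b) continuous_const
  intro x hx
  rw [iteratedDeriv_succ_eqOn_of_hasDerivAt hU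
      (fun y hy => hasDerivAt_log_exp_sub_mul_exp_neg hc hy) 2 hx,
    iteratedDeriv_succ_eqOn_of_hasDerivAt hU
      (fun y hy => hasDerivAt_one_add_expDecay_div (ne_of_lt hy)) 1 hx,
    iteratedDeriv_succ_eqOn_of_hasDerivAt hU
      (fun y hy => hasDerivAt_expDecay_div_sq (ne_of_lt hy)) 0 hx, iteratedDeriv_zero]

end logDeriv

section changeOfVariables

variable {E : Type*} [NormedAddCommGroup E] [NormedSpace ℝ E] {S b : ℝ}

local notation "u" => expDecay S b

lemma abs_deriv_expDecay (hS : 0 ≤ S) (hb : 0 ≤ b) (T : ℝ) :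
    |-(2 * S) * u T| = 2 * S * u T := by
  rw [neg_mul, abs_neg, abs_of_nonneg (by unfold expDecay; positivity)]

lemma integrableOn_Ioo_iff_expDecay (hS : 0 < S) (hb : 0 < b) (g : ℝ → E) :
    IntegrableOn g (Ioo 0 b) ↔ IntegrableOn (fun T => (2 * S * u T) • g (u T)) (Ioi 0) := by
  simpa only [image_expDecay_Ioi hS hb, abs_deriv_expDecay hS.le hb.le] using
    integrableOn_image_iff_integrableOn_abs_deriv_smul (measurableSet_Ioi (a := 0))
      (fun x _ => (hasDerivAt_expDecay S b x).hasDerivWithinAt)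
      (expDecay_injective hS.ne' hb.ne').injOn g

lemma integral_Ioo_eq_integral_Ioi_expDecay (hS : 0 < S) (hb : 0 < b) (g : ℝ → E) :
    ∫ x in Ioo 0 b, g x = ∫ T in Ioi 0, (2 * S * u T) • g (u T) := by
  simpa only [image_expDecay_Ioi hS hb, abs_deriv_expDecay hS.le hb.le] using
    integral_image_eq_integral_abs_deriv_smul (measurableSet_Ioi (a := 0))
      (fun x _ => (hasDerivAt_expDecay S b x).hasDerivWithinAt)
      (expDecay_injective hS.ne' hb.ne').injOn g

end changeOfVariables

section betaIntegral

variable {s b : ℝ}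

lemma continuousOn_rpow_div_one_sub_pow (hs : 0 ≤ s) (n : ℕ) :
    ContinuousOn (fun x : ℝ => x ^ s / (1 - x) ^ n) (Iio 1) :=
  (continuousOn_id.rpow_const fun _ _ => Or.inr hs).div₀ (by fun_prop)
    fun _ hx => pow_ne_zero n (sub_pos.mpr hx).ne'

lemma continuousOn_one_add_mul_rpow_div_one_sub_pow (hs : 0 ≤ s) (n : ℕ) :
    ContinuousOn (fun x : ℝ => (1 + x) * (x ^ s / (1 - x) ^ n)) (Iio 1) :=
  (by fun_prop : ContinuousOn (fun x : ℝ => 1 + x) _).mul (continuousOn_rpow_div_one_sub_pow hs n)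

lemma ContinuousOn.integrableOn_Ioo_of_Iio {g : ℝ → ℝ} {c : ℝ} (hg : ContinuousOn g (Iio c))
    (a : ℝ) (hb : b < c) : IntegrableOn g (Ioo a b) :=
  ((hg.mono fun _ hx => hx.2.trans_lt hb).integrableOn_Icc).mono_set Ioo_subset_Icc_self

lemma integral_rpow_mul_one_add_div_one_sub_pow_three (hs : 0 ≤ s) (hb0 : 0 ≤ b) (hb1 : b < 1) :
    ∫ x in Ioo 0 b, (1 + x) * (x ^ s / (1 - x) ^ 3)
      = b ^ (s + 1) / (1 - b) ^ 2 - s * ∫ x in Ioo 0 b, x ^ s / (1 - x) ^ 2 := by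
  have hcont2 := continuousOn_rpow_div_one_sub_pow hs 2
  have hcont3 := continuousOn_one_add_mul_rpow_div_one_sub_pow hs 3
  have hderiv : ∀ x ∈ Ioo 0 b, HasDerivAt (fun y : ℝ => y ^ (s + 1) / (1 - y) ^ 2)
      ((1 + x) * (x ^ s / (1 - x) ^ 3) + s * (x ^ s / (1 - x) ^ 2)) x := by
    intro x ⟨hx0, hxb⟩
    have h1 : 1 - x ≠ 0 := by linarith
    refine ((hasDerivAt_rpow_const (Or.inl hx0.ne')).div
      ((hasDerivAt_id' x).const_sub 1 |>.fun_pow 2) (pow_ne_zero 2 h1)).congr_deriv ?_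
    rw [add_sub_cancel_right, rpow_add_one hx0.ne']
    field_simp
    ring
  have hIcc : Icc 0 b ⊆ Iio 1 := fun _ hx => hx.2.trans_lt hb1
  have hftc := intervalIntegral.integral_eq_sub_of_hasDerivAt_of_le hb0
    ((continuousOn_rpow_div_one_sub_pow (by linarith) 2).mono hIcc) hderiv
    (((hcont3.fun_add (continuousOn_const.fun_mul hcont2)).mono
      (uIcc_of_le hb0 ▸ hIcc)).intervalIntegrable)
  rw [intervalIntegral.integral_of_le hb0, integral_Ioc_eq_integral_Ioo,
    integral_add (hcont3.integrableOn_Ioo_of_Iio 0 hb1)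
      ((hcont2.integrableOn_Ioo_of_Iio 0 hb1).const_mul s),
    integral_const_mul, zero_rpow (by linarith), zero_div, sub_zero] at hftc
  linarith

end betaIntegral

section laplace

variable {S b c w : ℝ}

local notation "u" => expDecay S b

lemma exp_mul_iteratedDeriv_three_log_eq (hS : 0 < S) (hb0 : 0 < b) (hb1 : b < 1) (hc : 0 < c)
    {T : ℝ} (hT : 0 < T) :
    exp (-w * T) * iteratedDeriv 3 (fun y => log (c * (exp (S * y) - b * exp (-(S * y))))) T
      = 4 * S ^ 2 / b ^ (w / (2 * S))
        * ((2 * S * u T) • ((1 + u T) * (u T ^ (w / (2 * S)) / (1 - u T) ^ 3))) := by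
  have hu1 : u T < 1 := (expDecay_lt hS hb0 hT).trans hb1
  have h1 : 1 - u T ≠ 0 := by linarith
  have hexp : exp (-w * T) = u T ^ (w / (2 * S)) / b ^ (w / (2 * S)) := by
    rw [expDecay_rpow hb0, mul_div_cancel₀ _ (by positivity), mul_div_cancel_left₀ _ (by positivity)]
    ring_nf
  rw [iteratedDeriv_three_log_exp_sub_mul_exp_neg hc hu1, hexp, smul_eq_mul]
  field_simp
  ring

lemma integrableOn_exp_mul_iteratedDeriv_three_log (hS : 0 < S) (hb0 : 0 < b) (hb1 : b < 1)
    (hc : 0 < c) (hw : 0 ≤ w) :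
    IntegrableOn (fun T => exp (-w * T)
      * iteratedDeriv 3 (fun y => log (c * (exp (S * y) - b * exp (-(S * y))))) T) (Ioi 0) := by
  have h := (continuousOn_one_add_mul_rpow_div_one_sub_pow (s := w / (2 * S)) (by positivity)
    3).integrableOn_Ioo_of_Iio 0 hb1
  exact IntegrableOn.congr_fun (((integrableOn_Ioo_iff_expDecay hS hb0 _).mp h).const_mul _)
    (fun T hT => (exp_mul_iteratedDeriv_three_log_eq hS hb0 hb1 hc hT).symm) measurableSet_Ioi

lemma integral_exp_mul_iteratedDeriv_three_log (hS : 0 < S) (hb0 : 0 < b) (hb1 : b < 1)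
    (hc : 0 < c) (hw : 0 ≤ w) :
    ∫ T in Ioi 0, exp (-w * T)
        * iteratedDeriv 3 (fun y => log (c * (exp (S * y) - b * exp (-(S * y))))) T
      = 4 * S ^ 2 * b / (1 - b) ^ 2 - 2 * w * S * b ^ (-(w / (2 * S)))
          * ∫ x in Ioo 0 b, x ^ (w / (2 * S)) / (1 - x) ^ 2 := by
  rw [setIntegral_congr_fun measurableSet_Ioi
      (fun T hT => exp_mul_iteratedDeriv_three_log_eq hS hb0 hb1 hc hT),
    integral_const_mul, ← integral_Ioo_eq_integral_Ioi_expDecay hS hb0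
      fun x => (1 + x) * (x ^ (w / (2 * S)) / (1 - x) ^ 3),
    integral_rpow_mul_one_add_div_one_sub_pow_three (by positivity) hb0.le hb1,
    rpow_add_one hb0.ne', rpow_neg hb0.le]
  have h1 : 1 - b ≠ 0 := by linarith
  have hbs : b ^ (w / (2 * S)) ≠ 0 := (rpow_pos_of_pos hb0 _).ne'
  field_simp
  ring

end laplace

lemma Sg_pos {α : ℝ} (h : 1 / (2 * √3) < α) : 0 < Sg α := by
  have h3 : √3 ^ 2 = 3 := sq_sqrt (by norm_num)
  have h' : 1 < α * (2 * √3) := (div_lt_iff₀ (by positivity)).mp h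
  exact sqrt_pos.mpr (by nlinarith [sqrt_nonneg 3])

lemma Sg_lt_self {α : ℝ} (hα : 0 < α) (h : α < 1 / 2) : Sg α < α :=
  (sqrt_lt' hα).mpr (by nlinarith)

lemma mul_cosh_add_mul_sinh_eq {a S : ℝ} (h : a + S ≠ 0) (y : ℝ) :
    S * cosh y + a * sinh y = (a + S) / 2 * (exp y - (a - S) / (a + S) * exp (-y)) := by
  rw [cosh_eq, sinh_eq]
  field_simp
  ring

lemma sq_sub_sq_eq_mul_div_one_sub_sq {a S : ℝ} (hS : S ≠ 0) (h : a + S ≠ 0) :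
    a ^ 2 - S ^ 2 = 4 * S ^ 2 * ((a - S) / (a + S)) / (1 - (a - S) / (a + S)) ^ 2 := by
  have : 1 - (a - S) / (a + S) = 2 * S / (a + S) := by field_simp; ring
  rw [this]
  field_simp
  ring

/-- With `β = (α − Σ)/(α + Σ) ∈ (0,1)`: for every `w > 0` the integrals converge and
`∫₀^∞ e^{−wT} (log C)'''(T) dT
  = α² − Σ² − 2wΣ β^{−w/(2Σ)} ∫₀^β x^{w/(2Σ)}/(1 − x)² dx`. -/
theorem stmt13 (α : ℝ) (h1 : 1 / (2 * Real.sqrt 3) < α) (h2 : α < 1 / 2)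
    (β : ℝ) (hβ : β = (α - Sg α) / (α + Sg α)) :
    0 < β ∧ β < 1 ∧
    ∀ w : ℝ, 0 < w →
      IntegrableOn (fun T => Real.exp (-w * T)
          * iteratedDeriv 3 (fun x => Real.log (Cg α x)) T) (Set.Ioi 0) ∧
      IntegrableOn (fun x : ℝ => x ^ (w / (2 * Sg α)) / (1 - x) ^ 2) (Set.Ioo 0 β) ∧
      (∫ T in Set.Ioi (0 : ℝ),
          Real.exp (-w * T) * iteratedDeriv 3 (fun x => Real.log (Cg α x)) T)
        = α ^ 2 - Sg α ^ 2 - 2 * w * Sg α * β ^ (-(w / (2 * Sg α)))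
            * ∫ x in Set.Ioo (0 : ℝ) β, x ^ (w / (2 * Sg α)) / (1 - x) ^ 2 := by
  have hα : 0 < α := (by positivity : (0 : ℝ) < 1 / (2 * √3)).trans h1
  have hS := Sg_pos h1
  have hSα := Sg_lt_self hα h2
  have hαS : 0 < α + Sg α := by linarith
  have hb0 : 0 < β := hβ ▸ div_pos (by linarith) hαS
  have hb1 : β < 1 := by rw [hβ, div_lt_one hαS]; linarith
  have hC : (fun x => log (Cg α x))
      = fun x => log ((α + Sg α) / 2 * (exp (Sg α * x) - β * exp (-(Sg α * x)))) := by
    funext x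
    rw [Cg, mul_cosh_add_mul_sinh_eq hαS.ne', hβ]
  have hdiff : α ^ 2 - Sg α ^ 2 = 4 * Sg α ^ 2 * β / (1 - β) ^ 2 := by
    rw [hβ]
    exact sq_sub_sq_eq_mul_div_one_sub_sq hS.ne' hαS.ne'
  have hc : 0 < (α + Sg α) / 2 := by linarith
  refine ⟨hb0, hb1, fun w hw => ?_⟩
  rw [hC, hdiff]
  exact ⟨integrableOn_exp_mul_iteratedDeriv_three_log hS hb0 hb1 hc hw.le,
    (continuousOn_rpow_div_one_sub_pow (by positivity) 2).integrableOn_Ioo_of_Iio 0 hb1,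
    integral_exp_mul_iteratedDeriv_three_log hS hb0 hb1 hc hw.le⟩
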